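/- Under the four-level exposure model with noisy network observation and i.i.d. Bernoulli(p) treatment, let P_i be the 4×4 expected confusion matrix of vertex i (rows indexed by observed exposure, columns by true exposure) and let ỹ_i be the 4-vector whose k-th component is I{vertex i's observed exposure is c_k} · y_i(c_l), where c_l is vertex i's true exposure. Then E[ỹ_i] = P_i y_i, where y_i = (y_i(c_{11}), y_i(c_{10}), y_i(c_{01}), y_i(c_{00}))^⊤; the determinant of P_i equals p² (1−p)² (1−p)^{2 d_i} (1−αp)^{2(N−1−d_i)} (1 − (1−(1−β)p)^{d_i})²; and if 0 < p < 1, β < 1, and 1 ≤ d_i ≤ N−1, then P_i is invertible and the method-of-moments estimator with known parameters satisfies E[P_i^{−1} ỹ_i] = P_i^{−1} E[ỹ_i] = y_i. -/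

import Mathlib

/-!
Fix a vertex `i`. Both exposures of `i` are functions of the treatment `Z i` and of the pairs
`(Z j, Ã i j)`, `j ≠ i`; these pairs are independent, because every edge variable sits in exactly
one of them. So the treatment of `i` is independent of its two exposure indicators, and the
confusion matrix is the Kronecker product `diag(p, 1 - p) ⊗ Q` with `Q` the joint law of
(observed exposure, true exposure). Hence `det P = p² (1 - p)² (det Q)²`, and the determinant of
a 2 × 2 joint law is the covariance `ℙ(no, no) - ℙ(no) ℙ(no)` of the two "unexposed" events.
Each of these three probabilities is a product over the other vertices; with `d` the degree
of `i` they are `(1 - p)^d`, `(1 - (1 - β) p)^d (1 - α p)^(N-1-d)` and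
`(1 - p)^d (1 - α p)^(N-1-d)`.
The identity `E ỹ = P y` is linearity of the integral over the events `{obs = k, tru = l}`,
and unbiasedness follows by applying `P⁻¹`.
-/

open MeasureTheory ProbabilityTheory Filter

open Finset
open scoped Matrix Kronecker

lemma Finset.prod_ite_eq_one_eq_pow_mul_pow {ι M : Type*} [CommMonoid M] (s : Finset ι)
    {f : ι → ℕ} (hf : ∀ j ∈ s, f j = 0 ∨ f j = 1) (x y : M) :
    ∏ j ∈ s, (if f j = 1 then x else y) = x ^ (∑ j ∈ s, f j) * y ^ (#s - ∑ j ∈ s, f j) := by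
  have hcard : #(s.filter (f · = 1)) = ∑ j ∈ s, f j := by
    rw [card_filter]
    refine sum_congr rfl fun j hj ↦ ?_
    rcases hf j hj with h | h <;> simp [h]
  have hsplit := card_filter_add_card_filter_not (s := s) (f · = 1)
  rw [prod_ite, prod_const, prod_const, hcard]
  congr 2
  omega

lemma Finset.not_sum_pos_iff_forall_ne {ι : Type*} [Fintype ι] {f : ι → ℕ} {i : ι}
    (hi : f i = 0) : ¬ 0 < ∑ j, f j ↔ ∀ j, i ≠ j → f j = 0 := by
  simp only [not_lt, nonpos_iff_eq_zero, sum_eq_zero_iff, mem_univ, true_imp_iff]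
  refine ⟨fun h j _ ↦ h j, fun h j ↦ ?_⟩
  by_cases hj : i = j
  · exact hj ▸ hi
  · exact h j hj

lemma apply_min_max_of_symm {α γ : Type*} [LinearOrder α] {f : α → α → γ}
    (hf : ∀ a b, f a b = f b a) (a b : α) : f (min a b) (max a b) = f a b := by
  rcases le_total a b with h | h
  · simp [h]
  · simp [h, hf a b]

lemma ite_mul_comp_eq_sum_indicator {Ω α β : Type*} [DecidableEq α] [Fintype β]
    {X : Ω → α} {Y : Ω → β} (f : β → ℝ) (k : α) (ω : Ω) :
    (if X ω = k then 1 else 0) * f (Y ω)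
      = ∑ l, {ω | X ω = k ∧ Y ω = l}.indicator (fun _ ↦ f l) ω := by
  by_cases hk : X ω = k
  · rw [if_pos hk, one_mul, sum_eq_single (Y ω)]
    · simp [Set.indicator, hk]
    · intro l _ hl
      simp [Set.indicator, Ne.symm hl]
    · simp
  · simp [Set.indicator, hk]

namespace ProbabilityTheory

variable {Ω ι : Type*} [MeasurableSpace Ω] {μ : Measure Ω}

lemma iIndepFun.curry {κ : ι → Type*} {𝓧 : (i : ι) → κ i → Type*}
    [∀ i j, MeasurableSpace (𝓧 i j)] {X : (i : ι) → (j : κ i) → Ω → 𝓧 i j}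
    (mX : ∀ i j, Measurable (X i j))
    (h : iIndepFun (fun p : (i : ι) × κ i ↦ X p.1 p.2) μ) :
    iIndepFun (fun i ω j ↦ X i j ω) μ := by
  have := h.isProbabilityMeasure
  have (i : ι) (j : κ i) : IsProbabilityMeasure (μ.map (X i j)) :=
    Measure.isProbabilityMeasure_map (mX i j).aemeasurable
  have hblock (i : ι) :
      μ.map (fun ω j ↦ X i j ω) = Measure.infinitePi (fun j ↦ μ.map (X i j)) :=
    (iIndepFun_iff_map_fun_eq_infinitePi_map (by fun_prop)).1
      (h.precomp (g := Sigma.mk i) sigma_mk_injective)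
  have hcurry : (fun ω i j ↦ X i j ω) = MeasurableEquiv.piCurry 𝓧 ∘ fun ω p ↦ X p.1 p.2 ω :=
    rfl
  rw [iIndepFun_iff_map_fun_eq_infinitePi_map (by fun_prop), hcurry,
    ← Measure.map_map (by fun_prop) (by fun_prop),
    (iIndepFun_iff_map_fun_eq_infinitePi_map (by fun_prop)).1 h,
    Measure.infinitePi_map_piCurry (fun i j ↦ μ.map (X i j))]
  simp only [hblock]

lemma iIndepFun.comp_fibers {κ : Type*} {β : κ → Type*} [∀ k, MeasurableSpace (β k)]
    {γ : ι → Type*} [∀ i, MeasurableSpace (γ i)] {X : ∀ k, Ω → β k}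
    (mX : ∀ k, Measurable (X k)) (h : iIndepFun X μ) (g : κ → ι)
    (F : ∀ i, (∀ k : {k // g k = i}, β k) → γ i) (mF : ∀ i, Measurable (F i))
    {Y : ∀ i, Ω → γ i} (hY : ∀ i ω, Y i ω = F i fun k ↦ X k ω) :
    iIndepFun Y μ := by
  have hfibers : iIndepFun (fun i ω (k : {k // g k = i}) ↦ X k ω) μ :=
    iIndepFun.curry (X := fun i (k : {k // g k = i}) ↦ X k) (fun _ _ ↦ mX _)
      (h.precomp (Equiv.sigmaFiberEquiv g).injective)
  convert hfibers.comp F mF using 1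
  ext i ω
  exact hY i ω

lemma iIndepFun.measureReal_biInter_preimage {β : ι → Type*} [∀ i, MeasurableSpace (β i)]
    {X : ∀ i, Ω → β i} (h : iIndepFun X μ) (s : Finset ι) {S : ∀ i, Set (β i)}
    (hS : ∀ i ∈ s, MeasurableSet (S i)) :
    μ.real (⋂ i ∈ s, X i ⁻¹' S i) = ∏ i ∈ s, μ.real (X i ⁻¹' S i) := by
  simp only [measureReal_def, h.measure_inter_preimage_eq_mul s hS, ENNReal.toReal_prod]

lemma iIndepFun.measureReal_forall_ne_mem {N : ℕ} {γ : Type*} [MeasurableSpace γ]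
    {W : Fin N → Ω → γ} (hW : iIndepFun W μ) (i : Fin N) {S : Fin N → Set γ}
    (hS : ∀ j, MeasurableSet (S j)) {a : Fin N → ℕ} (ha : ∀ j, a j = 0 ∨ a j = 1)
    (hai : a i = 0) {x y : ℝ}
    (hSj : ∀ j, i ≠ j → μ.real (W j ⁻¹' S j) = if a j = 1 then x else y) :
    μ.real {ω | ∀ j, i ≠ j → W j ω ∈ S j} = x ^ (∑ j, a j) * y ^ (N - 1 - ∑ j, a j) := by
  have hset : {ω | ∀ j, i ≠ j → W j ω ∈ S j} = ⋂ j ∈ univ.erase i, W j ⁻¹' S j := by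
    ext ω; simp [eq_comm]
  rw [hset, hW.measureReal_biInter_preimage _ fun j _ ↦ hS j,
    prod_congr rfl fun j hj ↦ hSj j (ne_of_mem_erase hj).symm,
    prod_ite_eq_one_eq_pow_mul_pow _ fun j _ ↦ ha j, sum_erase _ hai,
    card_erase_of_mem (mem_univ i), card_univ, Fintype.card_fin]

lemma measureReal_prodMk_eq_kronecker {α β : Type*} [DecidableEq α] [MeasurableSpace α]
    [MeasurableSingletonClass α] [MeasurableSpace β] [MeasurableSingletonClass β]
    {T : Ω → α} {O H : Ω → β} (hind : IndepFun T (fun ω ↦ (O ω, H ω)) μ) :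
    (Matrix.of fun k l : α × β ↦ μ.real {ω | (T ω, O ω) = k ∧ (T ω, H ω) = l}) =
      Matrix.diagonal (fun a ↦ μ.real (T ⁻¹' {a})) ⊗ₖ
        Matrix.of fun b d ↦ μ.real {ω | O ω = b ∧ H ω = d} := by
  ext ⟨a, b⟩ ⟨c, d⟩
  simp only [Matrix.of_apply, Matrix.kroneckerMap_apply, Prod.mk.injEq]
  by_cases hac : a = c
  · subst hac
    have hset : {ω | (T ω = a ∧ O ω = b) ∧ T ω = a ∧ H ω = d}
        = T ⁻¹' {a} ∩ (fun ω ↦ (O ω, H ω)) ⁻¹' {(b, d)} := by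
      ext ω
      simp only [Set.mem_ofPred_eq, Set.mem_inter_iff, Set.mem_preimage,
        Set.mem_singleton_iff, Prod.mk.injEq]
      tauto
    have hOH : (fun ω ↦ (O ω, H ω)) ⁻¹' {(b, d)} = {ω | O ω = b ∧ H ω = d} := by
      ext ω; simp
    rw [hset, Matrix.diagonal_apply_eq, measureReal_def, hind.measure_inter_preimage_eq_mul _ _
      (measurableSet_singleton _) (measurableSet_singleton _), ENNReal.toReal_mul, hOH]
    rfl
  · have hset : {ω | (T ω = a ∧ O ω = b) ∧ T ω = c ∧ H ω = d} = ∅ := by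
      ext ω
      simp only [Set.mem_ofPred_eq, Set.mem_empty_iff_false, iff_false]
      rintro ⟨⟨rfl, -⟩, h, -⟩
      exact hac h
    rw [hset, Matrix.diagonal_apply_ne _ hac]
    simp

lemma integral_mulVec_apply {m n : Type*} [Fintype n] (M : Matrix m n ℝ) {v : Ω → n → ℝ}
    (hv : ∀ l, Integrable (fun ω ↦ v ω l) μ) (k : m) :
    ∫ ω, (M *ᵥ v ω) k ∂μ = (M *ᵥ fun l ↦ ∫ ω, v ω l ∂μ) k := by
  simp only [Matrix.mulVec, dotProduct]
  rw [integral_finsetSum _ fun l _ ↦ (hv l).const_mul _]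
  simp only [integral_const_mul]

lemma integral_inv_mulVec_eq_of_integral_eq_mulVec {n : Type*} [Fintype n] [DecidableEq n]
    {M : Matrix n n ℝ} (hM : IsUnit M.det) {v : Ω → n → ℝ}
    (hv : ∀ l, Integrable (fun ω ↦ v ω l) μ) {y : n → ℝ}
    (hmean : ∀ k, ∫ ω, v ω k ∂μ = (M *ᵥ y) k) (k : n) :
    ∫ ω, (M⁻¹ *ᵥ v ω) k ∂μ = y k := by
  rw [integral_mulVec_apply _ hv, funext hmean, Matrix.mulVec_mulVec,
    Matrix.nonsing_inv_mul _ hM, Matrix.one_mulVec]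

section Discrete

variable {α β : Type*} [DecidableEq α] [Fintype β] [MeasurableSpace α]
  [MeasurableSingletonClass α] [MeasurableSpace β] [MeasurableSingletonClass β]
  {X : Ω → α} {Y : Ω → β} [IsFiniteMeasure μ]

lemma integrable_ite_mul_comp (mX : Measurable X) (mY : Measurable Y) (f : β → ℝ) (k : α) :
    Integrable (fun ω ↦ (if X ω = k then 1 else 0) * f (Y ω)) μ := by
  simp only [ite_mul_comp_eq_sum_indicator]
  exact integrable_finsetSum _ fun l _ ↦ (integrable_const _).indicator
    ((mX (measurableSet_singleton k)).inter (mY (measurableSet_singleton l)))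

lemma integral_ite_mul_comp (mX : Measurable X) (mY : Measurable Y) (f : β → ℝ) (k : α) :
    ∫ ω, (if X ω = k then 1 else 0) * f (Y ω) ∂μ
      = ∑ l, μ.real {ω | X ω = k ∧ Y ω = l} * f l := by
  have hmeas (l : β) : MeasurableSet {ω | X ω = k ∧ Y ω = l} :=
    (mX (measurableSet_singleton k)).inter (mY (measurableSet_singleton l))
  simp only [ite_mul_comp_eq_sum_indicator]
  rw [integral_finsetSum _ fun l _ ↦ (integrable_const _).indicator (hmeas l)]
  simp only [integral_indicator_const _ (hmeas _), smul_eq_mul]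

end Discrete

variable [IsProbabilityMeasure μ]

lemma measureReal_eq_zero_eq_one_sub {X : Ω → ℕ} (mX : Measurable X)
    (hX : ∀ ω, X ω = 0 ∨ X ω = 1) :
    μ.real {ω | X ω = 0} = 1 - μ.real {ω | X ω = 1} := by
  have hset : {ω | X ω = 0} = {ω | X ω = 1}ᶜ := by
    ext ω; rcases hX ω with h | h <;> simp [h]
  rw [hset]
  exact probReal_compl_eq_one_sub (mX (measurableSet_singleton 1))

lemma IndepFun.measureReal_mul_eq_zero {X Y : Ω → ℕ} (hXY : IndepFun X Y μ)
    (hX : ∀ ω, X ω = 0 ∨ X ω = 1) (hY : ∀ ω, Y ω = 0 ∨ Y ω = 1)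
    (mX : Measurable X) (mY : Measurable Y) :
    μ.real {ω | X ω * Y ω = 0} = 1 - μ.real {ω | X ω = 1} * μ.real {ω | Y ω = 1} := by
  have hset : {ω | X ω * Y ω = 0} = (X ⁻¹' {1} ∩ Y ⁻¹' {1})ᶜ := by
    ext ω; rcases hX ω with h | h <;> rcases hY ω with h' | h' <;> simp [h, h']
  rw [hset, probReal_compl_eq_one_sub ((mX (measurableSet_singleton 1)).inter
    (mY (measurableSet_singleton 1))), measureReal_def, hXY.measure_inter_preimage_eq_mul _ _
    (measurableSet_singleton 1) (measurableSet_singleton 1), ENNReal.toReal_mul]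
  rfl

lemma det_measureReal_joint_fin_two {X Y : Ω → Fin 2} (mX : Measurable X) (mY : Measurable Y) :
    (Matrix.of fun b d ↦ μ.real {ω | X ω = b ∧ Y ω = d}).det =
      μ.real {ω | X ω = 1 ∧ Y ω = 1} - μ.real {ω | X ω = 1} * μ.real {ω | Y ω = 1} := by
  have hsplit (s : Set Ω) {V : Ω → Fin 2} (mV : Measurable V) :
      μ.real (s ∩ {ω | V ω = 0}) + μ.real (s ∩ {ω | V ω = 1}) = μ.real s := by
    have hne_one : ∀ v : Fin 2, ¬v = 1 ↔ v = 0 := by decide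
    have hsdiff : s \ {ω | V ω = 1} = s ∩ {ω | V ω = 0} := by
      ext ω
      simp only [Set.mem_sdiff, Set.mem_inter_iff, Set.mem_ofPred_eq, hne_one]
    rw [← hsdiff, add_comm]
    exact measureReal_inter_add_sdiff (mV (measurableSet_singleton 1))
  have hX1 := hsplit {ω | X ω = 1} mY
  have hX0 := hsplit {ω | X ω = 0} mY
  have hY1 := hsplit {ω | Y ω = 1} mX
  have htotal := hsplit Set.univ mX
  simp only [Set.univ_inter, probReal_univ] at htotal
  rw [← hX0, ← hX1] at htotal
  simp only [Matrix.det_fin_two, Matrix.of_apply, ← Set.ofPred_and] at hX1 hX0 hY1 htotal ⊢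
  simp only [and_comm (a := Y _ = 1)] at hY1
  rw [← hX1, ← hY1]
  linear_combination μ.real {ω | X ω = 1 ∧ Y ω = 1} * htotal

lemma det_measureReal_finProdFinEquiv {T O H : Ω → Fin 2} (mO : Measurable O)
    (mH : Measurable H) (hind : IndepFun T (fun ω ↦ (O ω, H ω)) μ) :
    (Matrix.of fun k l : Fin 4 ↦
        μ.real {ω | finProdFinEquiv (T ω, O ω) = k ∧ finProdFinEquiv (T ω, H ω) = l}).det
      = (μ.real {ω | T ω = 0} * μ.real {ω | T ω = 1}) ^ 2 *
        (μ.real {ω | O ω = 1 ∧ H ω = 1} - μ.real {ω | O ω = 1} * μ.real {ω | H ω = 1}) ^ 2 := by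
  have hreindex : (Matrix.of fun k l : Fin 4 ↦
        μ.real {ω | finProdFinEquiv (T ω, O ω) = k ∧ finProdFinEquiv (T ω, H ω) = l})
      = Matrix.reindex finProdFinEquiv finProdFinEquiv (Matrix.of fun k l : Fin 2 × Fin 2 ↦
        μ.real {ω | (T ω, O ω) = k ∧ (T ω, H ω) = l}) := by
    ext k l
    simp only [Matrix.reindex_apply, Matrix.submatrix_apply, Matrix.of_apply,
      ← Equiv.eq_symm_apply]
  rw [hreindex, Matrix.det_reindex_self, measureReal_prodMk_eq_kronecker hind,
    Matrix.det_kronecker, Matrix.det_diagonal, det_measureReal_joint_fin_two mO mH]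
  simp only [Fintype.card_fin, Fin.prod_univ_two]
  rfl

end ProbabilityTheory

def yesNo (t : Prop) [Decidable t] : Fin 2 := if t then 0 else 1

@[simp]
lemma yesNo_eq_one_iff (t : Prop) [Decidable t] : yesNo t = 1 ↔ ¬t := by
  unfold yesNo; split_ifs with h <;> simp [h]

def exposureLevel (treated exposed : Prop) [Decidable treated] [Decidable exposed] : Fin 4 :=
  if treated then (if exposed then 0 else 1) else (if exposed then 2 else 3)

lemma exposureLevel_eq_finProdFinEquiv (treated exposed : Prop) [Decidable treated]
    [Decidable exposed] :
    exposureLevel treated exposed = finProdFinEquiv (yesNo treated, yesNo exposed) := by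
  unfold exposureLevel yesNo; split_ifs <;> rfl

section Model

variable {Ω : Type*} [MeasurableSpace Ω] {μ : Measure Ω} {N : ℕ}
  {Z : Fin N → Ω → ℕ} {Atil : Fin N → Fin N → Ω → ℕ} {A : Fin N → Fin N → ℕ}

lemma measurable_yesNo_sum_pos {B : Fin N → Ω → ℕ} (hZ : ∀ j, Measurable (Z j))
    (hB : ∀ j, Measurable (B j)) : Measurable fun ω ↦ yesNo (0 < ∑ j, Z j ω * B j ω) :=
  (measurable_of_countable fun n : ℕ ↦ yesNo (0 < n)).comp
    (Finset.measurable_sum _ fun j _ ↦ (hZ j).mul (hB j))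

lemma measurable_exposureLevel {B : Fin N → Ω → ℕ} (hZ : ∀ j, Measurable (Z j))
    (hB : ∀ j, Measurable (B j)) {i : Fin N} {e : Ω → Fin 4}
    (he : ∀ ω, e ω = exposureLevel (Z i ω = 1) (0 < ∑ j, Z j ω * B j ω)) :
    Measurable e := by
  simp only [funext he, exposureLevel_eq_finProdFinEquiv]
  exact (measurable_of_countable _).comp
    (((measurable_of_countable fun n : ℕ ↦ yesNo (n = 1)).comp (hZ i)).prodMk
      (measurable_yesNo_sum_pos hZ hB))

/-- Edge `{a, b}` with `a < b` goes to the block of `b` if `a = i` and to that of `a` otherwise,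
so the block of `j ≠ i` holds `Z j` and the edge `{i, j}`. -/
lemma iIndepFun_treatment_observedEdge (hZmeas : ∀ i, Measurable (Z i))
    (hmeas : ∀ i j, Measurable (Atil i j)) (hsymm : ∀ i j ω, Atil i j ω = Atil j i ω)
    (hdiag : ∀ i ω, Atil i i ω = 0)
    (hindep : iIndepFun
      (Sum.elim Z (fun e : {e : Fin N × Fin N // e.1 < e.2} => Atil e.1.1 e.1.2)) μ)
    (i : Fin N) :
    iIndepFun (fun j ω ↦ (Z j ω, Atil i j ω)) μ := by
  classical
  let g : Fin N ⊕ {e : Fin N × Fin N // e.1 < e.2} → Fin N :=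
    Sum.elim id fun e ↦ if e.1.1 = i then e.1.2 else e.1.1
  have hg (j : Fin N) (h : i ≠ j) : g (.inr ⟨(min i j, max i j), min_lt_max.2 h⟩) = j := by
    rcases le_total i j with hij | hij
    · simp [g, hij]
    · simp [g, hij, Ne.symm h]
  refine hindep.comp_fibers (fun k ↦ k.rec hZmeas fun e ↦ hmeas _ _) g
    (fun j v ↦ (v ⟨.inl j, rfl⟩,
      if h : i = j then 0 else v ⟨.inr ⟨(min i j, max i j), min_lt_max.2 h⟩, hg j h⟩))
    (fun j ↦ measurable_of_countable _) fun j ω ↦ ?_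
  by_cases h : i = j
  · subst h; simp [hdiag]
  · simp [h, apply_min_max_of_symm (f := fun a b ↦ Atil a b ω) (fun a b ↦ hsymm a b ω)]

lemma indepFun_treatment_observedEdge (hsymm : ∀ i j ω, Atil i j ω = Atil j i ω)
    (hindep : iIndepFun
      (Sum.elim Z (fun e : {e : Fin N × Fin N // e.1 < e.2} => Atil e.1.1 e.1.2)) μ)
    {i j : Fin N} (h : i ≠ j) :
    IndepFun (Z j) (Atil i j) μ := by
  have hedge : Atil i j = Atil (min i j) (max i j) := funext fun ω ↦
    (apply_min_max_of_symm (f := fun a b ↦ Atil a b ω) (fun a b ↦ hsymm a b ω) i j).symm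
  rw [hedge]
  exact hindep.indepFun (i := .inl j) (j := .inr ⟨(min i j, max i j), min_lt_max.2 h⟩) (by simp)

lemma measureReal_observedEdge_eq_one (hAsymm : ∀ i j, A i j = A j i)
    (hA01 : ∀ i j, A i j = 0 ∨ A i j = 1) {α β : ℝ} (hα0 : 0 ≤ α) (hβ1 : β ≤ 1)
    (hsymm : ∀ i j ω, Atil i j ω = Atil j i ω)
    (hfalse : ∀ i j : Fin N, i < j → A i j = 0 → μ {ω | Atil i j ω = 1} = ENNReal.ofReal α)
    (htrue : ∀ i j : Fin N, i < j → A i j = 1 →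
      μ {ω | Atil i j ω = 1} = ENNReal.ofReal (1 - β))
    {i j : Fin N} (h : i ≠ j) :
    μ.real {ω | Atil i j ω = 1} = if A i j = 1 then 1 - β else α := by
  have hlt : min i j < max i j := min_lt_max.2 h
  have hA : A (min i j) (max i j) = A i j := apply_min_max_of_symm hAsymm i j
  have hset : {ω | Atil (min i j) (max i j) ω = 1} = {ω | Atil i j ω = 1} := by
    ext ω
    simp only [Set.mem_ofPred_eq,
      apply_min_max_of_symm (f := fun a b ↦ Atil a b ω) (fun a b ↦ hsymm a b ω)]
  rw [← hset, measureReal_def]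
  rcases hA01 i j with h0 | h1
  · rw [hfalse _ _ hlt (hA.trans h0), if_neg (by simp [h0]), ENNReal.toReal_ofReal hα0]
  · rw [htrue _ _ hlt (hA.trans h1), if_pos h1, ENNReal.toReal_ofReal (by linarith)]

lemma measureReal_treatment_mul_observedEdge_eq_zero [IsProbabilityMeasure μ]
    (hZmeas : ∀ i, Measurable (Z i)) (hZ01 : ∀ i ω, Z i ω = 0 ∨ Z i ω = 1)
    (hmeas : ∀ i j, Measurable (Atil i j)) (h01 : ∀ i j ω, Atil i j ω = 0 ∨ Atil i j ω = 1)
    (hsymm : ∀ i j ω, Atil i j ω = Atil j i ω)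
    (hindep : iIndepFun
      (Sum.elim Z (fun e : {e : Fin N × Fin N // e.1 < e.2} => Atil e.1.1 e.1.2)) μ)
    (hAsymm : ∀ i j, A i j = A j i) (hA01 : ∀ i j, A i j = 0 ∨ A i j = 1)
    {α β : ℝ} (hα0 : 0 ≤ α) (hβ1 : β ≤ 1)
    (hfalse : ∀ i j : Fin N, i < j → A i j = 0 → μ {ω | Atil i j ω = 1} = ENNReal.ofReal α)
    (htrue : ∀ i j : Fin N, i < j → A i j = 1 →
      μ {ω | Atil i j ω = 1} = ENNReal.ofReal (1 - β))
    {p : ℝ} {i j : Fin N} (hZ1 : μ.real {ω | Z j ω = 1} = p) (h : i ≠ j) :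
    μ.real {ω | Z j ω * Atil i j ω = 0} = 1 - p * (if A i j = 1 then 1 - β else α) := by
  rw [(indepFun_treatment_observedEdge hsymm hindep h).measureReal_mul_eq_zero (hZ01 j)
    (h01 i j) (hZmeas j) (hmeas i j), hZ1,
    measureReal_observedEdge_eq_one hAsymm hA01 hα0 hβ1 hsymm hfalse htrue h]

variable {i : Fin N} {p α β : ℝ}

lemma measureReal_not_exposed_true (hW : iIndepFun (fun j ω ↦ (Z j ω, Atil i j ω)) μ)
    (hA01 : ∀ j, A i j = 0 ∨ A i j = 1) (hAdiag : A i i = 0)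
    (hZ0 : ∀ j, μ.real {ω | Z j ω = 0} = 1 - p) :
    μ.real {ω | ¬ 0 < ∑ j, Z j ω * A i j} = (1 - p) ^ (∑ j, A i j) := by
  have := hW.isProbabilityMeasure
  have hset : {ω | ¬ 0 < ∑ j, Z j ω * A i j}
      = {ω | ∀ j, i ≠ j → (Z j ω, Atil i j ω) ∈ {w : ℕ × ℕ | w.1 * A i j = 0}} := by
    ext ω; exact not_sum_pos_iff_forall_ne (by simp [hAdiag])
  rw [hset, hW.measureReal_forall_ne_mem i (fun _ ↦ .of_discrete) hA01 hAdiag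
    (x := 1 - p) (y := 1), one_pow, mul_one]
  intro j _
  rcases hA01 j with h | h
  · simp [h]
  · simpa [h] using hZ0 j

lemma measureReal_not_exposed_observed (hW : iIndepFun (fun j ω ↦ (Z j ω, Atil i j ω)) μ)
    (hA01 : ∀ j, A i j = 0 ∨ A i j = 1) (hAdiag : A i i = 0) (hdiag : ∀ ω, Atil i i ω = 0)
    (hZA0 : ∀ j, i ≠ j →
      μ.real {ω | Z j ω * Atil i j ω = 0} = 1 - p * (if A i j = 1 then 1 - β else α)) :
    μ.real {ω | ¬ 0 < ∑ j, Z j ω * Atil i j ω}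
      = (1 - (1 - β) * p) ^ (∑ j, A i j) * (1 - α * p) ^ (N - 1 - ∑ j, A i j) := by
  have hset : {ω | ¬ 0 < ∑ j, Z j ω * Atil i j ω}
      = {ω | ∀ j, i ≠ j → (Z j ω, Atil i j ω) ∈ {w : ℕ × ℕ | w.1 * w.2 = 0}} := by
    ext ω; exact not_sum_pos_iff_forall_ne (by simp [hdiag])
  rw [hset, hW.measureReal_forall_ne_mem i (fun _ ↦ .of_discrete) hA01 hAdiag]
  intro j hj
  exact (hZA0 j hj).trans (by split_ifs <;> ring)

lemma measureReal_not_exposed_both (hW : iIndepFun (fun j ω ↦ (Z j ω, Atil i j ω)) μ)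
    (hA01 : ∀ j, A i j = 0 ∨ A i j = 1) (hAdiag : A i i = 0) (hdiag : ∀ ω, Atil i i ω = 0)
    (hZ0 : ∀ j, μ.real {ω | Z j ω = 0} = 1 - p)
    (hZA0 : ∀ j, i ≠ j →
      μ.real {ω | Z j ω * Atil i j ω = 0} = 1 - p * (if A i j = 1 then 1 - β else α)) :
    μ.real {ω | ¬ 0 < ∑ j, Z j ω * Atil i j ω ∧ ¬ 0 < ∑ j, Z j ω * A i j}
      = (1 - p) ^ (∑ j, A i j) * (1 - α * p) ^ (N - 1 - ∑ j, A i j) := by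
  have hset : {ω | ¬ 0 < ∑ j, Z j ω * Atil i j ω ∧ ¬ 0 < ∑ j, Z j ω * A i j}
      = {ω | ∀ j, i ≠ j →
          (Z j ω, Atil i j ω) ∈ {w : ℕ × ℕ | w.1 * w.2 = 0 ∧ w.1 * A i j = 0}} := by
    ext ω
    simp only [Set.mem_ofPred_eq, ← forall_and,
      not_sum_pos_iff_forall_ne (f := fun j ↦ Z j ω * Atil i j ω) (i := i) (by simp [hdiag]),
      not_sum_pos_iff_forall_ne (f := fun j ↦ Z j ω * A i j) (i := i) (by simp [hAdiag])]
  rw [hset, hW.measureReal_forall_ne_mem i (fun _ ↦ .of_discrete) hA01 hAdiag]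
  intro j hj
  rcases hA01 j with h | h
  · have hsetj : (fun ω ↦ (Z j ω, Atil i j ω)) ⁻¹' {w | w.1 * w.2 = 0 ∧ w.1 * A i j = 0}
        = {ω | Z j ω * Atil i j ω = 0} := by ext ω; simp [h]
    rw [hsetj, hZA0 j hj]
    simp [h, mul_comm]
  · have hsetj : (fun ω ↦ (Z j ω, Atil i j ω)) ⁻¹' {w | w.1 * w.2 = 0 ∧ w.1 * A i j = 0}
        = {ω | Z j ω = 0} := by ext ω; simp +contextual [h]
    rw [hsetj, hZ0 j]
    simp [h]

lemma indepFun_treatment_exposures (hW : iIndepFun (fun j ω ↦ (Z j ω, Atil i j ω)) μ)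
    (hZmeas : ∀ j, Measurable (Z j)) (hmeas : ∀ j, Measurable (Atil i j))
    (hdiag : ∀ ω, Atil i i ω = 0) (hAdiag : A i i = 0) :
    IndepFun (fun ω ↦ yesNo (Z i ω = 1))
      (fun ω ↦ (yesNo (0 < ∑ j, Z j ω * Atil i j ω), yesNo (0 < ∑ j, Z j ω * A i j))) μ := by
  have h := hW.indepFun_finset {i} (univ.erase i) (by simp)
    fun j ↦ (hZmeas j).prodMk (hmeas j)
  have hexposures : (fun ω ↦
        (yesNo (0 < ∑ j, Z j ω * Atil i j ω), yesNo (0 < ∑ j, Z j ω * A i j)))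
      = (fun v : univ.erase i → ℕ × ℕ ↦
          (yesNo (0 < ∑ j, (v j).1 * (v j).2), yesNo (0 < ∑ j, (v j).1 * A i j)))
        ∘ fun ω (j : univ.erase i) ↦ (Z j ω, Atil i j ω) := by
    funext ω
    rw [Function.comp_apply, sum_coe_sort (univ.erase i) (fun j ↦ Z j ω * Atil i j ω),
      sum_coe_sort (univ.erase i) (fun j ↦ Z j ω * A i j),
      sum_erase _ (by simp [hdiag]), sum_erase _ (by simp [hAdiag])]
  rw [hexposures]
  exact h.comp (measurable_of_countable fun v : ({i} : Finset (Fin N)) → ℕ × ℕ ↦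
    yesNo ((v ⟨i, mem_singleton_self i⟩).1 = 1)) (measurable_of_countable _)

lemma det_confusionMatrix (hW : iIndepFun (fun j ω ↦ (Z j ω, Atil i j ω)) μ)
    (hZmeas : ∀ j, Measurable (Z j)) (hmeas : ∀ j, Measurable (Atil i j))
    (hZ01 : ∀ j ω, Z j ω = 0 ∨ Z j ω = 1) (hA01 : ∀ j, A i j = 0 ∨ A i j = 1)
    (hAdiag : A i i = 0) (hdiag : ∀ ω, Atil i i ω = 0)
    (hZ1 : ∀ j, μ.real {ω | Z j ω = 1} = p)
    (hZA0 : ∀ j, i ≠ j →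
      μ.real {ω | Z j ω * Atil i j ω = 0} = 1 - p * (if A i j = 1 then 1 - β else α))
    {obs tru : Ω → Fin 4}
    (hobs : ∀ ω, obs ω = exposureLevel (Z i ω = 1) (0 < ∑ j, Z j ω * Atil i j ω))
    (htru : ∀ ω, tru ω = exposureLevel (Z i ω = 1) (0 < ∑ j, Z j ω * A i j)) :
    (Matrix.of fun k l : Fin 4 ↦ μ.real {ω | obs ω = k ∧ tru ω = l}).det
      = p ^ 2 * (1 - p) ^ 2 * (1 - p) ^ (2 * ∑ j, A i j)
          * (1 - α * p) ^ (2 * (N - 1 - ∑ j, A i j))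
          * (1 - (1 - (1 - β) * p) ^ (∑ j, A i j)) ^ 2 := by
  have := hW.isProbabilityMeasure
  have hZ0 (j : Fin N) : μ.real {ω | Z j ω = 0} = 1 - p := by
    rw [measureReal_eq_zero_eq_one_sub (hZmeas j) (hZ01 j), hZ1]
  have hT0 : μ.real {ω | yesNo (Z i ω = 1) = 0} = p := by simpa [yesNo] using hZ1 i
  have hT1 : μ.real {ω | ¬ Z i ω = 1} = 1 - p := by
    rw [← hZ0 i]
    congr 1
    ext ω
    rcases hZ01 i ω with h | h <;> simp [h]
  simp only [hobs, htru, exposureLevel_eq_finProdFinEquiv]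
  rw [det_measureReal_finProdFinEquiv (measurable_yesNo_sum_pos hZmeas hmeas)
    (measurable_yesNo_sum_pos hZmeas fun _ ↦ measurable_const)
    (indepFun_treatment_exposures hW hZmeas hmeas hdiag hAdiag)]
  simp only [hT0, hT1, yesNo_eq_one_iff,
    measureReal_not_exposed_both hW hA01 hAdiag hdiag hZ0 hZA0,
    measureReal_not_exposed_observed hW hA01 hAdiag hdiag hZA0,
    measureReal_not_exposed_true hW hA01 hAdiag hZ0]
  ring

lemma exposure_det_ne_zero {d m : ℕ} (hp0 : 0 < p) (hp1 : p < 1) (hα1 : α ≤ 1)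
    (hβ0 : 0 ≤ β) (hβ1 : β < 1) (hd : 1 ≤ d) :
    p ^ 2 * (1 - p) ^ 2 * (1 - p) ^ (2 * d) * (1 - α * p) ^ (2 * m)
      * (1 - (1 - (1 - β) * p) ^ d) ^ 2 ≠ 0 := by
  have hαp : α * p < 1 := lt_of_le_of_lt (mul_le_of_le_one_left hp0.le hα1) hp1
  have hr : (1 - (1 - β) * p) ^ d < 1 :=
    pow_lt_one₀ (by nlinarith) (by nlinarith) (by omega)
  simp [hp0.ne', (sub_pos.2 hp1).ne', (sub_pos.2 hαp).ne', (sub_pos.2 hr).ne']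

end Model

theorem mme_known_parameters_unbiased_general
    {Ω : Type} [MeasurableSpace Ω] (μ : Measure Ω) [IsProbabilityMeasure μ]
    (N : ℕ)
    (A : Fin N → Fin N → ℕ)
    (hAsymm : ∀ i j, A i j = A j i)
    (hAdiag : ∀ i, A i i = 0)
    (hA01 : ∀ i j, A i j = 0 ∨ A i j = 1)
    (α β p : ℝ) (hα0 : 0 ≤ α) (hα1 : α ≤ 1) (hβ0 : 0 ≤ β) (hβ1 : β ≤ 1)
    (hp0 : 0 ≤ p)
    (Z : Fin N → Ω → ℕ)
    (hZmeas : ∀ i, Measurable (Z i))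
    (hZ01 : ∀ i ω, Z i ω = 0 ∨ Z i ω = 1)
    (hZp : ∀ i, μ {ω | Z i ω = 1} = ENNReal.ofReal p)
    (Atil : Fin N → Fin N → Ω → ℕ)
    (hmeas : ∀ i j, Measurable (Atil i j))
    (hsymm : ∀ i j ω, Atil i j ω = Atil j i ω)
    (hdiag : ∀ i ω, Atil i i ω = 0)
    (h01 : ∀ i j ω, Atil i j ω = 0 ∨ Atil i j ω = 1)
    (hfalse : ∀ i j : Fin N, i < j → A i j = 0 →
      μ {ω | Atil i j ω = 1} = ENNReal.ofReal α)
    (htrue : ∀ i j : Fin N, i < j → A i j = 1 →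
      μ {ω | Atil i j ω = 1} = ENNReal.ofReal (1 - β))
    (hindep : iIndepFun
      (Sum.elim Z (fun e : {e : Fin N × Fin N // e.1 < e.2} => Atil e.1.1 e.1.2)) μ)
    -- observed and true exposure levels (0 ↦ c_11, 1 ↦ c_10, 2 ↦ c_01, 3 ↦ c_00)
    (obs tru : Fin N → Ω → Fin 4)
    (hobs : ∀ i ω, obs i ω =
      if Z i ω = 1 then (if 0 < ∑ j, Z j ω * Atil i j ω then 0 else 1)
      else (if 0 < ∑ j, Z j ω * Atil i j ω then 2 else 3))
    (htru : ∀ i ω, tru i ω =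
      if Z i ω = 1 then (if 0 < ∑ j, Z j ω * A i j then 0 else 1)
      else (if 0 < ∑ j, Z j ω * A i j then 2 else 3))
    -- fixed potential outcomes
    (y : Fin N → Fin 4 → ℝ)
    -- the observed-outcome vector ỹ_i
    (ytil : Fin N → Ω → Fin 4 → ℝ)
    (hytil : ∀ i ω k, ytil i ω k = (if obs i ω = k then 1 else 0) * y i (tru i ω))
    -- the expected confusion matrix P_i
    (P : Fin N → Matrix (Fin 4) (Fin 4) ℝ)
    (hP : ∀ i k l, P i k l = (μ {ω | obs i ω = k ∧ tru i ω = l}).toReal) :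
    ∀ i : Fin N,
      -- E[ỹ_i] = P_i y_i
      (∀ k, ∫ ω, ytil i ω k ∂μ = (P i).mulVec (y i) k) ∧
      -- determinant formula
      ((P i).det = p ^ 2 * (1 - p) ^ 2 * (1 - p) ^ (2 * ∑ j, A i j)
          * (1 - α * p) ^ (2 * (N - 1 - ∑ j, A i j))
          * (1 - (1 - (1 - β) * p) ^ (∑ j, A i j)) ^ 2) ∧
      -- invertibility and unbiasedness of the MME with known parameters
      (0 < p → p < 1 → β < 1 → 1 ≤ ∑ j, A i j → (∑ j, A i j) ≤ N - 1 →
        IsUnit (P i).det ∧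
        (∀ k, ∫ ω, (P i)⁻¹.mulVec (ytil i ω) k ∂μ
            = (P i)⁻¹.mulVec (fun l => ∫ ω, ytil i ω l ∂μ) k) ∧
        (∀ k, ∫ ω, (P i)⁻¹.mulVec (ytil i ω) k ∂μ = y i k)) := by

  intro i
  have hW := iIndepFun_treatment_observedEdge hZmeas hmeas hsymm hdiag hindep i
  have hZ1 (j : Fin N) : μ.real {ω | Z j ω = 1} = p := by
    rw [measureReal_def, hZp j, ENNReal.toReal_ofReal hp0]
  have hZA0 (j : Fin N) := measureReal_treatment_mul_observedEdge_eq_zero hZmeas hZ01 hmeas h01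
    hsymm hindep hAsymm hA01 hα0 hβ1 hfalse htrue (i := i) (hZ1 j)
  have mobs : Measurable (obs i) := measurable_exposureLevel hZmeas (hmeas i) (hobs i)
  have mtru : Measurable (tru i) :=
    measurable_exposureLevel hZmeas (fun _ ↦ measurable_const) (htru i)
  have hint (l : Fin 4) : Integrable (fun ω ↦ ytil i ω l) μ := by
    simp only [hytil]
    exact integrable_ite_mul_comp mobs mtru _ _
  have hmean (k : Fin 4) : ∫ ω, ytil i ω k ∂μ = (P i).mulVec (y i) k := by
    simp only [hytil, integral_ite_mul_comp mobs mtru, Matrix.mulVec, dotProduct, hP,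
      measureReal_def]
  have hdet := (congrArg Matrix.det (Matrix.ext (hP i))).trans <| det_confusionMatrix hW hZmeas
    (hmeas i) hZ01 (hA01 i) (hAdiag i) (hdiag i) hZ1 hZA0 (hobs i) (htru i)
  refine ⟨hmean, hdet, fun hp hp_lt_one hβ hd _ ↦ ?_⟩
  have hunit : IsUnit (P i).det :=
    isUnit_iff_ne_zero.2 (hdet ▸ exposure_det_ne_zero hp hp_lt_one hα1 hβ0 hβ hd)
  exact ⟨hunit, integral_mulVec_apply _ hint,
    integral_inv_mulVec_eq_of_integral_eq_mulVec hunit hint hmean⟩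

/-- With `P i` the 4×4 expected confusion matrix of vertex `i`
(rows: observed exposure, columns: true exposure, in the order c_11, c_10, c_01, c_00)
and `ytil i ω` the vector whose k-th component is the indicator of observed exposure
`c_k` times the potential outcome at the true exposure, one has `E[ỹ_i] = P_i y_i`,
the stated determinant formula, and (when `0 < p < 1`, `β < 1` and `1 ≤ d_i ≤ N−1`)
invertibility of `P_i` and unbiasedness `E[P_i⁻¹ ỹ_i] = P_i⁻¹ E[ỹ_i] = y_i` of the
method-of-moments estimator with known parameters. -/
theorem mme_known_parameters_unbiased
    {Ω : Type} [MeasurableSpace Ω] (μ : Measure Ω) [IsProbabilityMeasure μ]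
    (N : ℕ)
    (A : Fin N → Fin N → ℕ)
    (hAsymm : ∀ i j, A i j = A j i)
    (hAdiag : ∀ i, A i i = 0)
    (hA01 : ∀ i j, A i j = 0 ∨ A i j = 1)
    (α β p : ℝ) (hα0 : 0 ≤ α) (hα1 : α ≤ 1) (hβ0 : 0 ≤ β) (hβ1 : β ≤ 1)
    (hp0 : 0 ≤ p) (hp1 : p ≤ 1)
    (Z : Fin N → Ω → ℕ)
    (hZmeas : ∀ i, Measurable (Z i))
    (hZ01 : ∀ i ω, Z i ω = 0 ∨ Z i ω = 1)
    (hZp : ∀ i, μ {ω | Z i ω = 1} = ENNReal.ofReal p)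
    (Atil : Fin N → Fin N → Ω → ℕ)
    (hmeas : ∀ i j, Measurable (Atil i j))
    (hsymm : ∀ i j ω, Atil i j ω = Atil j i ω)
    (hdiag : ∀ i ω, Atil i i ω = 0)
    (h01 : ∀ i j ω, Atil i j ω = 0 ∨ Atil i j ω = 1)
    (hfalse : ∀ i j : Fin N, i < j → A i j = 0 →
      μ {ω | Atil i j ω = 1} = ENNReal.ofReal α)
    (htrue : ∀ i j : Fin N, i < j → A i j = 1 →
      μ {ω | Atil i j ω = 1} = ENNReal.ofReal (1 - β))
    (hindep : iIndepFun
      (Sum.elim Z (fun e : {e : Fin N × Fin N // e.1 < e.2} => Atil e.1.1 e.1.2)) μ)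
    -- observed and true exposure levels (0 ↦ c_11, 1 ↦ c_10, 2 ↦ c_01, 3 ↦ c_00)
    (obs tru : Fin N → Ω → Fin 4)
    (hobs : ∀ i ω, obs i ω =
      if Z i ω = 1 then (if 0 < ∑ j, Z j ω * Atil i j ω then 0 else 1)
      else (if 0 < ∑ j, Z j ω * Atil i j ω then 2 else 3))
    (htru : ∀ i ω, tru i ω =
      if Z i ω = 1 then (if 0 < ∑ j, Z j ω * A i j then 0 else 1)
      else (if 0 < ∑ j, Z j ω * A i j then 2 else 3))
    -- fixed potential outcomes
    (y : Fin N → Fin 4 → ℝ)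
    -- the observed-outcome vector ỹ_i
    (ytil : Fin N → Ω → Fin 4 → ℝ)
    (hytil : ∀ i ω k, ytil i ω k = (if obs i ω = k then 1 else 0) * y i (tru i ω))
    -- the expected confusion matrix P_i
    (P : Fin N → Matrix (Fin 4) (Fin 4) ℝ)
    (hP : ∀ i k l, P i k l = (μ {ω | obs i ω = k ∧ tru i ω = l}).toReal) :
    ∀ i : Fin N,
      -- E[ỹ_i] = P_i y_i
      (∀ k, ∫ ω, ytil i ω k ∂μ = (P i).mulVec (y i) k) ∧
      -- determinant formula
      ((P i).det = p ^ 2 * (1 - p) ^ 2 * (1 - p) ^ (2 * ∑ j, A i j)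
          * (1 - α * p) ^ (2 * (N - 1 - ∑ j, A i j))
          * (1 - (1 - (1 - β) * p) ^ (∑ j, A i j)) ^ 2) ∧
      -- invertibility and unbiasedness of the MME with known parameters
      (0 < p → p < 1 → β < 1 → 1 ≤ ∑ j, A i j → (∑ j, A i j) ≤ N - 1 →
        IsUnit (P i).det ∧
        (∀ k, ∫ ω, (P i)⁻¹.mulVec (ytil i ω) k ∂μ
            = (P i)⁻¹.mulVec (fun l => ∫ ω, ytil i ω l ∂μ) k) ∧
        (∀ k, ∫ ω, (P i)⁻¹.mulVec (ytil i ω) k ∂μ = y i k)) :=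
  mme_known_parameters_unbiased_general μ N A hAsymm hAdiag hA01 α β p hα0 hα1 hβ0 hβ1 hp0 Z hZmeas
    hZ01 hZp Atil hmeas hsymm hdiag h01 hfalse htrue hindep obs tru hobs htru y ytil hytil P hP
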